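/- Let p > 3 be prime and a ∈ F_p nonzero. For S_λ = Σ_{x ∈ F_p} σ(x³ + a x² + λ x), the variance (1/p)Σ_λ S_λ² − ((1/p)Σ_λ S_λ)² equals p − 2 − σ(−1). -/

import Mathlib

/-!
Write `χ` for the quadratic character and `q = |F|`. Since `x³ + a x² + λ x = x (x² + a x + λ)`,
`S_λ = ∑ₓ χ(x) χ(u(x) + λ)` with `u(x) = x² + a x`. Summing over `λ` first, `∑_λ S_λ = 0`
because `χ` sums to zero, and `∑_λ S_λ² = ∑_{x,y} χ(x) χ(y) ∑_λ χ((u(x) + λ)(u(y) + λ))`.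
The inner sum is `q - 1` when `u(x) = u(y)` and `-1` otherwise; the constant `-1` contributes
`-(∑ χ)² = 0`, so only the pairs in a common fibre `{x, -a - x}` of `u` survive, giving
`∑_λ S_λ² = q ((q - 1) - χ(-1) - 1)`.
-/

open Finset

section QuadraticCharSums

variable {F : Type*} [Field F] [Fintype F] [DecidableEq F]

theorem quadraticChar_sum_mul_self :
    ∑ x : F, quadraticChar F (x * x) = Fintype.card F - 1 := by
  have h : ∀ x : F, quadraticChar F (x * x) = 1 - if x = 0 then 1 else 0 := by
    intro x
    split_ifs with hx
    · simp [hx]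
    · rw [← sq, quadraticChar_sq_one' hx, sub_zero]
  simp [h, sum_sub_distrib]

/-- The substitution `x = -b t` turns the sum into `χ(-1)` times the Jacobi sum `J(χ, χ)`,
which is `-χ(-1)` since `χ = χ⁻¹`. -/
theorem quadraticChar_sum_mul_add (hF : ringChar F ≠ 2) {b : F} (hb : b ≠ 0) :
    ∑ x : F, quadraticChar F (x * (x + b)) = -1 := by
  have hJ := jacobiSum_nontrivial_inv (quadraticChar_ne_one hF)
  rw [(quadraticChar_isQuadratic F).inv, jacobiSum] at hJ
  have hsubst : ∀ t : F, quadraticChar F (-b * t * (-b * t + b)) =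
      quadraticChar F (-1) * (quadraticChar F t * quadraticChar F (1 - t)) := by
    intro t
    have : -b * t * (-b * t + b) = -1 * b ^ 2 * (t * (1 - t)) := by ring
    rw [this, map_mul, map_mul, map_mul, quadraticChar_sq_one' hb, mul_one]
  rw [← (mulLeft_bijective₀ (-b) (neg_ne_zero.mpr hb)).sum_comp]
  simp only [hsubst, ← mul_sum, hJ, mul_neg, ← sq,
    quadraticChar_sq_one (neg_ne_zero.mpr one_ne_zero : (-1 : F) ≠ 0)]

theorem quadraticChar_sum_add_mul_add (hF : ringChar F ≠ 2) (u v : F) :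
    ∑ l : F, quadraticChar F ((u + l) * (v + l)) =
      if u = v then (Fintype.card F : ℤ) - 1 else -1 := by
  rw [← (Equiv.subRight u).sum_comp]
  have h : ∀ m : F, (u + (m - u)) * (v + (m - u)) = m * (m + (v - u)) := fun m => by ring
  simp only [Equiv.subRight_apply, h]
  split_ifs with huv
  · simp only [huv, sub_self, add_zero, quadraticChar_sum_mul_self]
  · exact quadraticChar_sum_mul_add hF (sub_ne_zero.mpr (Ne.symm huv))

theorem sum_sq_sum_mul_quadraticChar_add (hF : ringChar F ≠ 2) (f : F → ℤ) (u : F → F) :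
    ∑ l : F, (∑ x : F, f x * quadraticChar F (u x + l)) ^ 2 =
      Fintype.card F * ∑ x : F, ∑ y : F, (if u x = u y then f x * f y else 0) -
        (∑ x : F, f x) ^ 2 := by
  calc ∑ l : F, (∑ x : F, f x * quadraticChar F (u x + l)) ^ 2
      = ∑ x : F, ∑ y : F, f x * f y * ∑ l : F, quadraticChar F ((u x + l) * (u y + l)) := by
        simp_rw [sq, sum_mul_sum, mul_sum, map_mul]
        rw [sum_comm]
        refine sum_congr rfl fun x _ => ?_
        rw [sum_comm]
        refine sum_congr rfl fun y _ => sum_congr rfl fun l _ => ?_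
        ring
    _ = ∑ x : F, ∑ y : F,
          ((Fintype.card F : ℤ) * (if u x = u y then f x * f y else 0) - f x * f y) := by
        refine sum_congr rfl fun x _ => sum_congr rfl fun y _ => ?_
        rw [quadraticChar_sum_add_mul_add hF]
        split_ifs <;> ring
    _ = _ := by
        simp only [sum_sub_distrib, ← mul_sum, sq, sum_mul_sum]

theorem filter_sq_add_mul_eq (a x : F) :
    univ.filter (fun y => x ^ 2 + a * x = y ^ 2 + a * y) = {x, -a - x} := by
  ext y
  simp only [mem_filter, mem_univ, true_and, mem_insert, mem_singleton]
  constructor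
  · intro h
    have key : (y - x) * (y + x + a) = 0 := by linear_combination -h
    rcases mul_eq_zero.mp key with h' | h'
    · exact .inl (by linear_combination h')
    · exact .inr (by linear_combination h')
  · rintro (rfl | rfl) <;> ring

theorem sum_sum_quadraticChar_mul_of_sq_add_mul_eq (hF : ringChar F ≠ 2) {a : F} (ha : a ≠ 0) :
    ∑ x : F, ∑ y : F, (if x ^ 2 + a * x = y ^ 2 + a * y then
        quadraticChar F x * quadraticChar F y else 0) =
      Fintype.card F - 2 - quadraticChar F (-1) := by
  have h2 : (2 : F) ≠ 0 := Ring.two_ne_zero hF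
  have hfiber : ∀ x : F, ∑ y : F, (if x ^ 2 + a * x = y ^ 2 + a * y then
      quadraticChar F x * quadraticChar F y else 0) =
      quadraticChar F (x * x) + quadraticChar F x * quadraticChar F (-a - x) -
        if x = -a / 2 then 1 else 0 := by
    intro x
    rw [← sum_filter, filter_sq_add_mul_eq, map_mul]
    by_cases hx : x = -a / 2
    · have hx0 : x ≠ 0 := by rw [hx]; exact div_ne_zero (neg_ne_zero.mpr ha) h2
      have hax : -a - x = x := by rw [hx]; field_simp; ring
      rw [hax, pair_eq_singleton, sum_singleton, if_pos hx, ← sq, quadraticChar_sq_one hx0]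
      ring
    · have hne : x ≠ -a - x := fun h => hx (by field_simp; linear_combination h)
      rw [sum_pair hne, if_neg hx, sub_zero]
  have hreflect : ∀ x : F, quadraticChar F x * quadraticChar F (-a - x) =
      quadraticChar F (-1) * quadraticChar F (x * (x + a)) := by
    intro x
    rw [show -a - x = -1 * (x + a) by ring, map_mul, map_mul]
    ring
  rw [sum_congr rfl fun x _ => hfiber x, sum_sub_distrib, sum_add_distrib,
    sum_congr rfl fun x _ => hreflect x, ← mul_sum, quadraticChar_sum_mul_self,
    quadraticChar_sum_mul_add hF ha, sum_ite_eq', if_pos (mem_univ _)]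
  ring


theorem sum_quadraticChar_cubic_eq (a l : F) :
    ∑ x : F, quadraticChar F (x ^ 3 + a * x ^ 2 + l * x) =
      ∑ x : F, quadraticChar F x * quadraticChar F ((x ^ 2 + a * x) + l) := by
  refine sum_congr rfl fun x _ => ?_
  rw [← map_mul]
  ring_nf

theorem sum_sum_quadraticChar_cubic (hF : ringChar F ≠ 2) (a : F) :
    ∑ l : F, ∑ x : F, quadraticChar F (x ^ 3 + a * x ^ 2 + l * x) = 0 := by
  have hshift : ∀ c : F, ∑ l : F, quadraticChar F (c + l) = 0 := fun c =>
    (Equiv.sum_comp (Equiv.addLeft c) (quadraticChar F)).trans (quadraticChar_sum_zero hF)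
  simp only [sum_quadraticChar_cubic_eq]
  rw [sum_comm]
  simp only [← mul_sum, hshift, mul_zero, sum_const_zero]

theorem sum_sq_sum_quadraticChar_cubic (hF : ringChar F ≠ 2) {a : F} (ha : a ≠ 0) :
    ∑ l : F, (∑ x : F, quadraticChar F (x ^ 3 + a * x ^ 2 + l * x)) ^ 2 =
      Fintype.card F * (Fintype.card F - 2 - quadraticChar F (-1)) := by
  simp only [sum_quadraticChar_cubic_eq]
  rw [sum_sq_sum_mul_quadraticChar_add hF (quadraticChar F) (fun x => x ^ 2 + a * x),
    sum_sum_quadraticChar_mul_of_sq_add_mul_eq hF ha, quadraticChar_sum_zero hF]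
  ring

end QuadraticCharSums

theorem stmt6 (p : ℕ) [Fact p.Prime] (hp : 3 < p) (a : ZMod p) (ha : a ≠ 0) :
    ((((∑ l : ZMod p, (∑ x : ZMod p, quadraticChar (ZMod p) (x ^ 3 + a * x ^ 2 + l * x)) ^ 2) : ℤ) : ℚ) / p) -
      ((((∑ l : ZMod p, ∑ x : ZMod p, quadraticChar (ZMod p) (x ^ 3 + a * x ^ 2 + l * x)) : ℤ) : ℚ) / p) ^ 2
      = p - 2 - quadraticChar (ZMod p) (-1) := by
  have hF : ringChar (ZMod p) ≠ 2 := by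
    rw [ZMod.ringChar_zmod_n]
    omega
  have hp0 : (p : ℚ) ≠ 0 := by exact_mod_cast (Fact.out : p.Prime).ne_zero
  rw [sum_sq_sum_quadraticChar_cubic hF ha, sum_sum_quadraticChar_cubic hF, ZMod.card]
  push_cast
  field_simp
  ring
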